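/- Suppose the CG-BiO iterates are run with a constant stepsize γ ∈ (0,1]. Then for every k ≥ 0, g(x_k) − g(x_0) ≤ (1/2) L_g D² γ. In particular, if additionally g(x_0) − g* ≤ ε_g/2 and γ ≤ ε_g/(L_g D²), then g(x_k) − g* ≤ ε_g for all k ≥ 0. -/

import Mathlib

open scoped InnerProductSpace

/-! By the descent lemma for the `L_g`-smooth `g` and the constraint
`⟪∇g(x_k), s_k - x_k⟫ ≤ g(x_0) - g(x_k)` defining `X_k`, one step satisfies
`g(x_{k+1}) - g(x_0) ≤ (1 - γ)(g(x_k) - g(x_0)) + L_g D² γ² / 2`.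
The fixed point `L_g D² γ / 2` of this recursion is therefore an invariant bound, and adding
`g(x_0) - g* ≤ ε_g / 2` gives the second claim. -/

lemma le_add_add_half_of_hasDerivAt_sub_le {φ φ' : ℝ → ℝ} {c : ℝ}
    (hφ : ∀ t ∈ Set.Icc (0 : ℝ) 1, HasDerivAt φ (φ' t) t)
    (hφ' : ∀ t ∈ Set.Ioo (0 : ℝ) 1, φ' t - φ' 0 ≤ c * t) :
    φ 1 ≤ φ 0 + φ' 0 + c / 2 := by
  set ψ : ℝ → ℝ := fun t => φ 0 + φ' 0 * t + c / 2 * t ^ 2 - φ t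
  have hψ : ∀ t ∈ Set.Icc (0 : ℝ) 1, HasDerivAt ψ (φ' 0 + c * t - φ' t) t := by
    intro t ht
    have hq := (((hasDerivAt_id' t).const_mul (φ' 0)).const_add (φ 0)).add
      ((hasDerivAt_pow 2 t).const_mul (c / 2))
    exact (hq.sub (hφ t ht)).congr_deriv (by push_cast; ring)
  have hmono : MonotoneOn ψ (Set.Icc 0 1) := by
    refine monotoneOn_of_hasDerivWithinAt_nonneg (f' := fun t => φ' 0 + c * t - φ' t)
      (convex_Icc 0 1)
      (fun t ht => (hψ t ht).continuousAt.continuousWithinAt) (fun t ht => ?_) (fun t ht => ?_)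
    all_goals rw [interior_Icc] at ht
    · exact (hψ t (Set.Ioo_subset_Icc_self ht)).hasDerivWithinAt
    · linarith [hφ' t ht]
  have hψ01 := hmono (Set.left_mem_Icc.2 zero_le_one) (Set.right_mem_Icc.2 zero_le_one) zero_le_one
  simp only [ψ] at hψ01
  linarith

section

variable {E : Type*} [NormedAddCommGroup E] [InnerProductSpace ℝ E] [CompleteSpace E]

lemma HasGradientAt.hasDerivAt_comp_add_smul {g : E → ℝ} {g' a v : E} {t : ℝ}
    (hg : HasGradientAt g g' (a + t • v)) :
    HasDerivAt (fun t : ℝ => g (a + t • v)) ⟪g', v⟫_ℝ t := by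
  have hline : HasDerivAt (fun t : ℝ => a + t • v) v t := by
    simpa using ((hasDerivAt_id t).smul_const v).const_add a
  simpa [InnerProductSpace.toDual_apply_apply, Function.comp_def] using
    hg.hasFDerivAt.comp_hasDerivAt t hline

/-- The descent lemma. -/
theorem Convex.le_add_inner_add_half_mul_sq {Z : Set E} (hZ : Convex ℝ Z) {g : E → ℝ}
    {g' : E → E} (hg : ∀ x ∈ Z, HasGradientAt g (g' x) x) {L : ℝ}
    (hL : ∀ x ∈ Z, ∀ y ∈ Z, ‖g' x - g' y‖ ≤ L * ‖x - y‖) {a b : E} (ha : a ∈ Z) (hb : b ∈ Z) :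
    g b ≤ g a + ⟪g' a, b - a⟫_ℝ + L / 2 * ‖b - a‖ ^ 2 := by
  have hseg : ∀ t ∈ Set.Icc (0 : ℝ) 1, a + t • (b - a) ∈ Z := fun t ht =>
    hZ.add_smul_sub_mem ha hb ht
  have key := le_add_add_half_of_hasDerivAt_sub_le (c := L * ‖b - a‖ ^ 2)
    (φ := fun t => g (a + t • (b - a))) (φ' := fun t => ⟪g' (a + t • (b - a)), b - a⟫_ℝ)
    (fun t ht => (hg _ (hseg t ht)).hasDerivAt_comp_add_smul) (fun t ht => ?_)
  · simpa [mul_div_right_comm] using key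
  · have ht0 : 0 ≤ t := ht.1.le
    calc ⟪g' (a + t • (b - a)), b - a⟫_ℝ - ⟪g' (a + (0 : ℝ) • (b - a)), b - a⟫_ℝ
        = ⟪g' (a + t • (b - a)) - g' a, b - a⟫_ℝ := by simp [inner_sub_left]
      _ ≤ ‖g' (a + t • (b - a)) - g' a‖ * ‖b - a‖ := real_inner_le_norm _ _
      _ ≤ L * ‖t • (b - a)‖ * ‖b - a‖ := by
          gcongr
          simpa using hL _ (hseg t (Set.Ioo_subset_Icc_self ht)) a ha
      _ = L * ‖b - a‖ ^ 2 * t := by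
          rw [norm_smul, Real.norm_of_nonneg ht0]; ring

theorem sub_le_of_conditionalGradient_step {Z : Set E} (hZ : Convex ℝ Z) {g : E → ℝ}
    {g' : E → E} (hg : ∀ x ∈ Z, HasGradientAt g (g' x) x) {L : ℝ} (hL0 : 0 ≤ L)
    (hL : ∀ x ∈ Z, ∀ y ∈ Z, ‖g' x - g' y‖ ≤ L * ‖x - y‖) {x s : E} (hx : x ∈ Z) (hs : s ∈ Z)
    {c D γ : ℝ} (hsx : ⟪g' x, s - x⟫_ℝ ≤ c - g x) (hsxD : ‖s - x‖ ≤ D)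
    (hγ0 : 0 ≤ γ) (hγ1 : γ ≤ 1) :
    g ((1 - γ) • x + γ • s) - c ≤ (1 - γ) * (g x - c) + L / 2 * D ^ 2 * γ ^ 2 := by
  have hstep : (1 - γ) • x + γ • s - x = γ • (s - x) := by module
  have hmem : (1 - γ) • x + γ • s ∈ Z := hZ hx hs (by linarith) hγ0 (by ring)
  have hdesc := hZ.le_add_inner_add_half_mul_sq hg hL hx hmem
  rw [hstep, real_inner_smul_right, norm_smul, Real.norm_of_nonneg hγ0] at hdesc
  have hinner : γ * ⟪g' x, s - x⟫_ℝ ≤ γ * (c - g x) := mul_le_mul_of_nonneg_left hsx hγ0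
  have hnorm : (γ * ‖s - x‖) ^ 2 ≤ (γ * D) ^ 2 := by gcongr
  nlinarith

end

theorem statement10_general {d : ℕ} (Z : Set (EuclideanSpace ℝ (Fin d)))
    (hZconv : Convex ℝ Z)
    (D : ℝ) (hD : ∀ x ∈ Z, ∀ y ∈ Z, ‖x - y‖ ≤ D)
    (g : EuclideanSpace ℝ (Fin d) → ℝ)
    (gradg : EuclideanSpace ℝ (Fin d) → EuclideanSpace ℝ (Fin d))
    (hgdiff : ∀ x, HasGradientAt g (gradg x) x)
    (Lg : ℝ) (hLg : 0 ≤ Lg)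
    (hgLip : ∀ x ∈ Z, ∀ y ∈ Z, ‖gradg x - gradg y‖ ≤ Lg * ‖x - y‖)
    (γ : ℝ) (hγ0 : 0 < γ) (hγ1 : γ ≤ 1)
    (εg : ℝ)
    (x s : ℕ → EuclideanSpace ℝ (Fin d))
    (hx0 : x 0 ∈ Z)
    (hsmem : ∀ k, s k ∈ Z ∧ ⟪gradg (x k), s k - x k⟫_ℝ ≤ g (x 0) - g (x k))
    (hupd : ∀ k, x (k + 1) = (1 - γ) • x k + γ • s k) :
    (∀ k : ℕ, g (x k) - g (x 0) ≤ (1/2) * Lg * D^2 * γ) ∧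
      ((g (x 0) - sInf (g '' Z) ≤ εg / 2 ∧ γ ≤ εg / (Lg * D^2)) →
        ∀ k : ℕ, g (x k) - sInf (g '' Z) ≤ εg) := by
  have hxZ : ∀ k, x k ∈ Z := by
    intro k
    induction k with
    | zero => exact hx0
    | succ k ih => rw [hupd k]; exact hZconv ih (hsmem k).1 (by linarith) hγ0.le (by ring)
  have hbound : ∀ k, g (x k) - g (x 0) ≤ 1 / 2 * Lg * D ^ 2 * γ := by
    intro k
    induction k with
    | zero => rw [sub_self]; positivity
    | succ k ih =>
      have hstep := sub_le_of_conditionalGradient_step hZconv (fun y _ => hgdiff y) hLg hgLip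
        (hxZ k) (hsmem k).1 (hsmem k).2 (hD _ (hsmem k).1 _ (hxZ k)) hγ0.le hγ1
      rw [← hupd k] at hstep
      nlinarith [mul_le_mul_of_nonneg_left ih (sub_nonneg.2 hγ1)]
  refine ⟨hbound, fun ⟨hx0g, hγε⟩ k => ?_⟩
  have hLDγ : Lg * D ^ 2 * γ ≤ εg := by
    rcases (by positivity : 0 ≤ Lg * D ^ 2).eq_or_lt with hLD | hLD
    · -- `εg / 0 = 0`, so `γ ≤ 0`
      rw [← hLD, div_zero] at hγε
      linarith
    · linarith [(le_div_iff₀ hLD).1 hγε]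
  linarith [hbound k]

/-- For CG-BiO iterates with constant stepsize `γ ∈ (0,1]`,
`g(x_k) − g(x_0) ≤ (1/2)L_g D² γ` for all `k`; moreover if `g(x_0) − g* ≤ ε_g/2`
and `γ ≤ ε_g/(L_g D²)`, then `g(x_k) − g* ≤ ε_g` for all `k`. -/
theorem statement10 {d : ℕ} (Z : Set (EuclideanSpace ℝ (Fin d)))
    (hZne : Z.Nonempty) (hZcomp : IsCompact Z) (hZconv : Convex ℝ Z)
    (D : ℝ) (hD : ∀ x ∈ Z, ∀ y ∈ Z, ‖x - y‖ ≤ D)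
    (f g : EuclideanSpace ℝ (Fin d) → ℝ)
    (gradf gradg : EuclideanSpace ℝ (Fin d) → EuclideanSpace ℝ (Fin d))
    (hfdiff : ∀ x, HasGradientAt f (gradf x) x)
    (hgconv : ConvexOn ℝ Set.univ g)
    (hgdiff : ∀ x, HasGradientAt g (gradg x) x)
    (Lg : ℝ) (hLg : 0 ≤ Lg)
    (hgLip : ∀ x ∈ Z, ∀ y ∈ Z, ‖gradg x - gradg y‖ ≤ Lg * ‖x - y‖)
    (γ : ℝ) (hγ0 : 0 < γ) (hγ1 : γ ≤ 1)
    (εg : ℝ) (hεg : 0 < εg)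
    (x s : ℕ → EuclideanSpace ℝ (Fin d))
    (hx0 : x 0 ∈ Z)
    (hsmem : ∀ k, s k ∈ Z ∧ ⟪gradg (x k), s k - x k⟫_ℝ ≤ g (x 0) - g (x k))
    (hsmin : ∀ k, ∀ s' ∈ Z, ⟪gradg (x k), s' - x k⟫_ℝ ≤ g (x 0) - g (x k) →
      ⟪gradf (x k), s k⟫_ℝ ≤ ⟪gradf (x k), s'⟫_ℝ)
    (hupd : ∀ k, x (k + 1) = (1 - γ) • x k + γ • s k) :
    (∀ k : ℕ, g (x k) - g (x 0) ≤ (1/2) * Lg * D^2 * γ) ∧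
      ((g (x 0) - sInf (g '' Z) ≤ εg / 2 ∧ γ ≤ εg / (Lg * D^2)) →
        ∀ k : ℕ, g (x k) - sInf (g '' Z) ≤ εg) :=
  statement10_general Z hZconv D hD g gradg hgdiff Lg hLg hgLip γ hγ0 hγ1 εg x s hx0 hsmem hupd
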